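/- The function φ(x,y) = 2 sin x + sin y is strictly positive at every point of the interior of the square s₁, and its only zeros in s₁ are the points (0,0) and (π,0). -/
import Mathlib


noncomputable def phi : ℝ × ℝ → ℝ :=
  fun p => 2 * Real.sin p.1 + Real.sin p.2

def s1 : Set (ℝ × ℝ) :=
  {p : ℝ × ℝ | (p.1 - Real.pi ≤ p.2 ∧ p.2 ≤ p.1) ∧
               (-p.1 ≤ p.2 ∧ p.2 ≤ -p.1 + Real.pi)}

open Real

lemma key_sin (x y : ℝ) (h2 : y ≤ x) (h3 : -x ≤ y) (h4 : y ≤ -x + Real.pi)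
    (h1 : x - Real.pi ≤ y) :
    0 ≤ Real.sin x ∧ -Real.sin x ≤ Real.sin y := by
  have hpi := Real.pi_pos
  have hx0 : 0 ≤ x := by linarith
  have hxpi : x ≤ Real.pi := by linarith
  have haby : |y| ≤ x := abs_le.mpr ⟨by linarith, h2⟩
  have haby2 : |y| ≤ Real.pi - x := abs_le.mpr ⟨by linarith, by linarith⟩
  have habn := abs_nonneg y
  have hsx : 0 ≤ Real.sin x := Real.sin_nonneg_of_nonneg_of_le_pi hx0 hxpi
  refine ⟨hsx, ?_⟩
  have hsabs : Real.sin |y| ≤ Real.sin x := by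
    rcases le_or_gt x (Real.pi / 2) with hc | hc
    · exact Real.strictMonoOn_sin.monotoneOn
        ⟨by linarith, by linarith⟩ ⟨by linarith, hc⟩ haby
    · have := Real.strictMonoOn_sin.monotoneOn
        (a := |y|) (b := Real.pi - x)
        ⟨by linarith, by linarith⟩ ⟨by linarith, by linarith⟩ haby2
      rwa [Real.sin_pi_sub] at this
  have : -Real.sin |y| ≤ Real.sin y := by
    rcases abs_cases y with ⟨h, h'⟩ | ⟨h, h'⟩
    · rw [h]
      have : 0 ≤ Real.sin y := Real.sin_nonneg_of_nonneg_of_le_pi h' (by linarith)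
      linarith
    · rw [h, Real.sin_neg, neg_neg]
  linarith

theorem stmt_15 :
    (∀ p ∈ interior s1, 0 < phi p) ∧
    (∀ p ∈ s1, phi p = 0 ↔ p = ((0, 0) : ℝ × ℝ) ∨ p = ((Real.pi, 0) : ℝ × ℝ)) := by
  have hzero : ∀ p ∈ s1, phi p = 0 ↔ p = ((0, 0) : ℝ × ℝ) ∨ p = ((Real.pi, 0) : ℝ × ℝ) := by
    rintro ⟨x, y⟩ hp
    obtain ⟨⟨h1, h2⟩, h3, h4⟩ := hp
    dsimp only at h1 h2 h3 h4
    obtain ⟨hs, hn⟩ := key_sin x y h2 h3 h4 h1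
    constructor
    · intro h0
      simp only [phi] at h0
      have hsx0 : Real.sin x = 0 := by linarith
      have hx0 : 0 ≤ x := by linarith
      have hxpi : x ≤ Real.pi := by linarith
      have hxcase : x = 0 ∨ x = Real.pi := by
        by_contra hc
        push_neg at hc
        have : 0 < Real.sin x :=
          Real.sin_pos_of_pos_of_lt_pi (lt_of_le_of_ne hx0 (Ne.symm hc.1))
            (lt_of_le_of_ne hxpi hc.2)
        linarith
      rcases hxcase with h | h
      · left
        have hy : y = 0 := le_antisymm (by linarith) (by linarith)
        rw [h, hy]
      · right
        have hy : y = 0 := le_antisymm (by linarith) (by linarith)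
        rw [h, hy]
    · rintro (h | h) <;> rw [Prod.ext_iff] at h <;> obtain ⟨ha, hb⟩ := h <;>
        (dsimp only at ha hb; subst ha; subst hb; simp [phi])
  refine ⟨?_, hzero⟩
  intro p hpint
  have hp : p ∈ s1 := interior_subset hpint
  have hge : 0 ≤ phi p := by
    obtain ⟨⟨h1, h2⟩, h3, h4⟩ := hp
    obtain ⟨hs, hn⟩ := key_sin p.1 p.2 h2 h3 h4 h1
    simp only [phi]; linarith
  rcases hge.lt_or_eq with h | h
  · exact h
  · exfalso
    have hzp := (hzero p hp).mp h.symm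
    have hnhds : s1 ∈ nhds p := mem_interior_iff_mem_nhds.mp hpint
    obtain ⟨ε, hε, hball⟩ := Metric.mem_nhds_iff.mp hnhds
    rcases hzp with h0 | h0
    · subst h0
      have hmem : ((-(ε/2), 0) : ℝ × ℝ) ∈ Metric.ball ((0,0) : ℝ × ℝ) ε := by
        rw [Metric.mem_ball, Prod.dist_eq]
        apply max_lt <;> rw [Real.dist_eq] <;>
          [skip; simpa using hε]
        rw [show -(ε/2) - (0:ℝ) = -(ε/2) by ring, abs_neg, abs_of_pos (by linarith)]
        linarith
      have hin := hball hmem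
      simp only [s1, Set.mem_setOf_eq] at hin
      obtain ⟨_, h3', _⟩ := hin
      linarith
    · subst h0
      have hmem : ((Real.pi + ε/2, 0) : ℝ × ℝ) ∈ Metric.ball ((Real.pi, 0) : ℝ × ℝ) ε := by
        rw [Metric.mem_ball, Prod.dist_eq]
        apply max_lt <;> rw [Real.dist_eq] <;>
          [skip; simpa using hε]
        rw [show Real.pi + ε/2 - Real.pi = ε/2 by ring, abs_of_pos (by linarith)]
        linarith
      have hin := hball hmem
      simp only [s1, Set.mem_setOf_eq] at hin
      obtain ⟨_, _, h4'⟩ := hin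
      linarith
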